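/- Let (A,Γ,G) be a GIFS on ℝ^d satisfying the open set condition, with invariant sets E_1,…,E_N, similarity dimension δ, and 0 < h_i := H^δ(E_i) < ∞ for all i. Then for every vertex i, the restricted Hausdorff measure μ_i = H^δ|_{E_i} equals the pushforward of the Markov measure P_i under the projection π_i, i.e. μ_i = P_i ∘ π_i^{−1}. -/

import Mathlib

open MeasureTheory Set

noncomputable section

/-- A graph-directed iterated function system (GIFS) with vertex set `Fin N`,
a finite edge set, and a contracting similitude of ratio `r e ∈ (0,1)` for each edge. -/
structure GIFS (X : Type) [MetricSpace X] (N : ℕ) where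
  Edge : Type
  fintypeEdge : Fintype Edge
  src : Edge → Fin N
  tgt : Edge → Fin N
  r : Edge → ℝ
  r_pos : ∀ e, 0 < r e
  r_lt_one : ∀ e, r e < 1
  g : Edge → X → X
  g_sim : ∀ e x y, dist (g e x) (g e y) = r e * dist x y

attribute [instance] GIFS.fintypeEdge

/-- The finite prefix of length `n` of an infinite word. -/
def prefixList {α : Type} (ω : ℕ → α) (n : ℕ) : List α := List.ofFn fun k : Fin n => ω k

/-- Spectral radius of a real square matrix: supremum of the moduli of its
complex eigenvalues. -/
def specRad {n : ℕ} (A : Matrix (Fin n) (Fin n) ℝ) : ℝ :=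
  sSup ((fun z : ℂ => ‖z‖) '' spectrum ℂ (A.map Complex.ofReal))

namespace GIFS

variable {X : Type} [MetricSpace X] {N : ℕ}

/-- `γ` is a finite path (possibly empty) starting from the vertex `i`. -/
def IsPathFrom (G : GIFS X N) (i : Fin N) (γ : List G.Edge) : Prop :=
  γ.Chain' (fun a b => G.tgt a = G.src b) ∧ ∀ e ∈ γ.head?, G.src e = i

/-- The terminal vertex of a finite path starting at `i`. -/
def pathTgt (G : GIFS X N) (i : Fin N) (γ : List G.Edge) : Fin N :=
  (γ.getLast?).elim i G.tgt

/-- The composition `g_{γ₁} ∘ ⋯ ∘ g_{γ_n}` along a finite path. -/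
def pathMap (G : GIFS X N) (γ : List G.Edge) : X → X :=
  γ.foldr (fun e f => G.g e ∘ f) id

/-- The cylinder set `E_γ = g_{γ₁} ∘ ⋯ ∘ g_{γ_n} (E_{t(γ)})` of a finite path from `i`. -/
def pathSet (G : GIFS X N) (E : Fin N → Set X) (i : Fin N) (γ : List G.Edge) : Set X :=
  G.pathMap γ '' E (G.pathTgt i γ)

/-- `E` is the family of invariant sets of the GIFS: nonempty compact sets
satisfying the set equations. -/
def IsInvariant (G : GIFS X N) (E : Fin N → Set X) : Prop :=
  (∀ i, (E i).Nonempty) ∧ (∀ i, IsCompact (E i)) ∧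
    ∀ i, E i = ⋃ e ∈ {e : G.Edge | G.src e = i}, G.g e '' E (G.tgt e)

/-- The open set condition witnessed by a given family of open sets. -/
def OSCWith (G : GIFS X N) (U : Fin N → Set X) : Prop :=
  (∀ i, (U i).Nonempty ∧ IsOpen (U i)) ∧
  (∀ e : G.Edge, G.g e '' U (G.tgt e) ⊆ U (G.src e)) ∧
  ∀ e f : G.Edge, e ≠ f → G.src e = G.src f →
    Disjoint (G.g e '' U (G.tgt e)) (G.g f '' U (G.tgt f))

/-- The open set condition. -/
def OSC (G : GIFS X N) : Prop := ∃ U, G.OSCWith U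

/-- The base graph is strongly connected. -/
def StronglyConnected (G : GIFS X N) : Prop :=
  ∀ i j : Fin N, ∃ γ : List G.Edge, γ ≠ [] ∧ G.IsPathFrom i γ ∧ G.pathTgt i γ = j

/-- The matrix `M(t)` with entries `M(t)_{ij} = ∑_{e ∈ Γ_{ij}} r_e ^ t`. -/
def M (G : GIFS X N) (t : ℝ) : Matrix (Fin N) (Fin N) ℝ :=
  Matrix.of fun i j => ∑ e : G.Edge, if G.src e = i ∧ G.tgt e = j then G.r e ^ t else 0

/-- `δ` is the similarity dimension: the (unique) positive real with `ρ(M(δ)) = 1`. -/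
def IsSimDim (G : GIFS X N) (δ : ℝ) : Prop := 0 < δ ∧ specRad (G.M δ) = 1

/-- The space of infinite paths emanating from the vertex `i`. -/
def InfPath (G : GIFS X N) (i : Fin N) : Type :=
  {ω : ℕ → G.Edge // G.src (ω 0) = i ∧ ∀ n, G.tgt (ω n) = G.src (ω (n + 1))}

instance (G : GIFS X N) : MeasurableSpace G.Edge := ⊤

instance (G : GIFS X N) (i : Fin N) : MeasurableSpace (G.InfPath i) :=
  MeasurableSpace.comap Subtype.val MeasurableSpace.pi

/-- `π` is the symbolic projection `Γ_i^∞ → E_i` : the image of an infinite path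
belongs to every cylinder set of its finite prefixes. -/
def IsCoding (G : GIFS X N) (E : Fin N → Set X) (i : Fin N) (π : G.InfPath i → X) : Prop :=
  ∀ (ω : G.InfPath i) (n : ℕ), π ω ∈ G.pathSet E i (prefixList ω.1 n)

end GIFS

/-- An ordered GIFS: a GIFS with a partial order on the edges which restricts to
a linear order on each `Γ_i` (edges emanating from `i`), edges emanating from
distinct vertices being incomparable. -/
structure OGIFS (X : Type) [MetricSpace X] (N : ℕ) extends GIFS X N where
  elt : Edge → Edge → Prop
  elt_src : ∀ {a b}, elt a b → src a = src b
  elt_irrefl : ∀ a, ¬ elt a a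
  elt_trans : ∀ {a b c}, elt a b → elt b c → elt a c
  elt_total : ∀ a b, src a = src b → elt a b ∨ a = b ∨ elt b a

namespace OGIFS

variable {X : Type} [MetricSpace X] {N : ℕ}

/-- The induced dictionary order on finite paths. -/
def PathLt (G : OGIFS X N) (γ ω : List G.Edge) : Prop := List.Lex G.elt γ ω

/-- Two adjacent edges in some `Γ_i`: consecutive in the order `≺`. -/
def AdjacentEdges (G : OGIFS X N) (e f : G.Edge) : Prop :=
  G.elt e f ∧ ¬ ∃ e', G.elt e e' ∧ G.elt e' f

/-- Two same-length paths from `i`, adjacent (consecutive) in the dictionary order. -/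
def Adjacent (G : OGIFS X N) (i : Fin N) (γ ω : List G.Edge) : Prop :=
  G.toGIFS.IsPathFrom i γ ∧ G.toGIFS.IsPathFrom i ω ∧ γ.length = ω.length ∧
  G.PathLt γ ω ∧
  ¬ ∃ η : List G.Edge, G.toGIFS.IsPathFrom i η ∧ η.length = γ.length ∧
      G.PathLt γ η ∧ G.PathLt η ω

/-- A linear GIFS: every two adjacent cylinders of invariant sets intersect. -/
def IsLinear (G : OGIFS X N) (E : Fin N → Set X) : Prop :=
  ∀ (i : Fin N) (γ ω : List G.Edge), G.Adjacent i γ ω →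
    (G.toGIFS.pathSet E i γ ∩ G.toGIFS.pathSet E i ω).Nonempty

/-- An infinite path from `i` is lowest if all its finite prefixes are lowest in the
dictionary order among same-length paths from `i`. -/
def IsLowest (G : OGIFS X N) (i : Fin N) (ω : G.toGIFS.InfPath i) : Prop :=
  ∀ (n : ℕ) (γ : List G.Edge), G.toGIFS.IsPathFrom i γ → γ.length = n →
    γ = prefixList ω.1 n ∨ G.PathLt (prefixList ω.1 n) γ

/-- An infinite path from `i` is highest if all its finite prefixes are highest. -/
def IsHighest (G : OGIFS X N) (i : Fin N) (ω : G.toGIFS.InfPath i) : Prop :=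
  ∀ (n : ℕ) (γ : List G.Edge), G.toGIFS.IsPathFrom i γ → γ.length = n →
    γ = prefixList ω.1 n ∨ G.PathLt γ (prefixList ω.1 n)

/-- `a` is the head of `E_i`: the projection of the lowest infinite path from `i`. -/
def IsHead (G : OGIFS X N) (E : Fin N → Set X) (i : Fin N) (a : X) : Prop :=
  ∃ ω : G.toGIFS.InfPath i, G.IsLowest i ω ∧
    ∀ n : ℕ, a ∈ G.toGIFS.pathSet E i (prefixList ω.1 n)

/-- `a` is the tail of `E_i`: the projection of the highest infinite path from `i`. -/
def IsTail (G : OGIFS X N) (E : Fin N → Set X) (i : Fin N) (a : X) : Prop :=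
  ∃ ω : G.toGIFS.InfPath i, G.IsHighest i ω ∧
    ∀ n : ℕ, a ∈ G.toGIFS.pathSet E i (prefixList ω.1 n)

/-- The chain condition: for adjacent edges `e ≺ f` emanating from a common vertex,
`g_e(tail of E_{t(e)}) = g_f(head of E_{t(f)})`. -/
def ChainCondition (G : OGIFS X N) (E : Fin N → Set X) : Prop :=
  ∀ e f : G.Edge, G.AdjacentEdges e f →
    ∀ b a : X, G.IsTail E (G.tgt e) b → G.IsHead E (G.tgt f) a → G.g e b = G.g f a

open Classical in
/-- Translation part of the maps of the measure-recording GIFS: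
`b_e = ∑_{e' ≺ e} h_{t(e')} r_{e'}^δ`. -/
def bCoef (G : OGIFS X N) (δ : ℝ) (h : Fin N → ℝ) (e : G.Edge) : ℝ :=
  ∑ e' : G.Edge, if G.elt e' e then h (G.tgt e') * G.r e' ^ δ else 0

/-- The maps `f_e (x) = r_e^δ x + b_e` of the measure-recording GIFS. -/
def fmap (G : OGIFS X N) (δ : ℝ) (h : Fin N → ℝ) (e : G.Edge) : ℝ → ℝ :=
  fun x => G.r e ^ δ * x + G.bCoef δ h e

/-- Composition of the measure-recording maps along a finite path. -/
def fPathMap (G : OGIFS X N) (δ : ℝ) (h : Fin N → ℝ) (γ : List G.Edge) : ℝ → ℝ :=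
  γ.foldr (fun e f => G.fmap δ h e ∘ f) id

/-- Cylinder intervals `F_γ` of the measure-recording GIFS (with `F_i = [0, h_i]`). -/
def fPathSet (G : OGIFS X N) (δ : ℝ) (h : Fin N → ℝ) (i : Fin N) (γ : List G.Edge) : Set ℝ :=
  G.fPathMap δ h γ '' Icc 0 (h (G.toGIFS.pathTgt i γ))

/-- `ρ` is the symbolic projection `Γ_i^∞ → F_i` of the measure-recording GIFS. -/
def IsFCoding (G : OGIFS X N) (δ : ℝ) (h : Fin N → ℝ) (i : Fin N)
    (ρ : G.toGIFS.InfPath i → ℝ) : Prop :=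
  ∀ (ω : G.toGIFS.InfPath i) (n : ℕ), ρ ω ∈ G.fPathSet δ h i (prefixList ω.1 n)

end OGIFS

/-- An optimal parametrization of an `s`-set `K`: a surjection `[0,1] → K` which is
almost one-to-one, measure-preserving and `1/s`-Hölder continuous. -/
def OptimalParam {X : Type} [MetricSpace X] [MeasurableSpace X] [BorelSpace X]
    (s : ℝ) (K : Set X) (ψ : ℝ → X) : Prop :=
  ψ '' Icc (0:ℝ) 1 = K ∧
  (∃ K' ⊆ K, ∃ I' ⊆ Icc (0:ℝ) 1,
      μH[s] (K \ K') = 0 ∧ volume (Icc (0:ℝ) 1 \ I') = 0 ∧ BijOn ψ I' K') ∧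
  (∀ F : Set ℝ, F ⊆ Icc (0:ℝ) 1 → MeasurableSet F →
      μH[s] (ψ '' F) = μH[s] K * volume F) ∧
  (∀ B : Set X, B ⊆ K → MeasurableSet B →
      volume (ψ ⁻¹' B ∩ Icc (0:ℝ) 1) = (μH[s] K)⁻¹ * μH[s] B) ∧
  ∃ c' : NNReal, 0 < c' ∧ HolderOnWith c' (Real.toNNReal (1 / s)) ψ (Icc (0:ℝ) 1)

end
noncomputable section

/-!
Two facts make `P_i` give every cylinder `[γ]` the mass `H^δ(E_γ)`: the Markov weights
telescope along a path, `h_i p_{γ₁} ⋯ p_{γₙ} = r_γ^δ h_{t(γ)}`, and `g_γ` is a similitude of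
ratio `r_γ`, so `H^δ(E_γ) = r_γ^δ h_{t(γ)}`. Summing over the paths of length `n` then gives
`H^δ(E_i) ≤ ∑_{|γ| = n} H^δ(E_γ) = P_i(Γ_i^∞) = H^δ(E_i)`, so `H^δ` is additive on every union
of sets `E_γ` of one generation. If `U` is open and `π_i ω ∈ U`, the shrinking sets `E_{ω|n}`
eventually lie in `U`, whence `P_i(π_i⁻¹ U) ≤ H^δ(U ∩ E_i)`. Outer regularity extends this
inequality to all sets, and since both measures have total mass `h_i`, passing to complements
turns it into an equality on Borel sets.
-/

open Filter Topology ENNReal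

namespace MeasureTheory

variable {α β ι : Type*} [MeasurableSpace α] [MeasurableSpace β]

lemma measure_biUnion_finset_eq_sum_of_subset {μ : Measure α} {s t : Finset ι} {A : ι → Set α}
    (hts : t ⊆ s) (hs : μ (⋃ k ∈ s, A k) = ∑ k ∈ s, μ (A k)) (hfin : ∑ k ∈ s, μ (A k) ≠ ∞) :
    μ (⋃ k ∈ t, A k) = ∑ k ∈ t, μ (A k) := by
  classical
  have hrest : ∑ k ∈ s \ t, μ (A k) ≠ ∞ :=
    ne_top_of_le_ne_top hfin (Finset.sum_le_sum_of_subset Finset.sdiff_subset)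
  refine (measure_biUnion_finset_le t A).antisymm (ENNReal.le_of_add_le_add_right hrest ?_)
  calc ∑ k ∈ t, μ (A k) + ∑ k ∈ s \ t, μ (A k) = μ (⋃ k ∈ s, A k) := by
        rw [add_comm, Finset.sum_sdiff hts, hs]
    _ ≤ μ (⋃ k ∈ t, A k) + μ (⋃ k ∈ s \ t, A k) := by
      refine le_trans (measure_mono ?_) (measure_union_le _ _)
      rw [← Finset.set_biUnion_union, Finset.union_sdiff_of_subset hts]
    _ ≤ μ (⋃ k ∈ t, A k) + ∑ k ∈ s \ t, μ (A k) := by gcongr; exact measure_biUnion_finset_le _ _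

lemma measure_preimage_le_of_forall_isOpen [TopologicalSpace α] {μ : Measure α} [μ.OuterRegular]
    {ν : Measure β} {f : β → α} (h : ∀ U, IsOpen U → ν (f ⁻¹' U) ≤ μ U) (A : Set α) :
    ν (f ⁻¹' A) ≤ μ A := by
  rw [A.measure_eq_iInf_isOpen]
  exact le_iInf₂ fun U hAU => le_iInf fun hU => (measure_mono (preimage_mono hAU)).trans (h U hU)

lemma measure_preimage_eq_of_forall_le {μ : Measure α} [IsFiniteMeasure μ] {ν : Measure β}
    {f : β → α} (hle : ∀ A, ν (f ⁻¹' A) ≤ μ A) (huniv : μ univ ≤ ν univ) {A : Set α}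
    (hA : MeasurableSet A) : ν (f ⁻¹' A) = μ A := by
  refine (hle A).antisymm (ENNReal.le_of_add_le_add_right (measure_ne_top μ Aᶜ) ?_)
  calc μ A + μ Aᶜ = μ univ := measure_add_measure_compl hA
    _ ≤ ν univ := huniv
    _ ≤ ν (f ⁻¹' A) + ν (f ⁻¹' Aᶜ) := by
      rw [preimage_compl, ← union_compl_self (f ⁻¹' A)]
      exact measure_union_le _ _
    _ ≤ ν (f ⁻¹' A) + μ Aᶜ := by gcongr; exact hle _

end MeasureTheory

lemma hausdorffMeasure_image_of_dist_eq {X Y : Type*} [MetricSpace X] [MetricSpace Y]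
    [MeasurableSpace X] [BorelSpace X] [MeasurableSpace Y] [BorelSpace Y] {f : X → Y} {r : ℝ}
    (hr : 0 < r) (hf : ∀ x y, dist (f x) (f y) = r * dist x y) {d : ℝ} (hd : 0 ≤ d)
    (s : Set X) : μH[d] (f '' s) = ENNReal.ofReal r ^ d * μH[d] s := by
  have hlip : LipschitzWith r.toNNReal f :=
    .of_dist_le_mul fun x y => by rw [hf, Real.coe_toNNReal _ hr.le]
  have hanti : AntilipschitzWith r⁻¹.toNNReal f :=
    .of_le_mul_dist fun x y => by
      rw [hf, Real.coe_toNNReal _ (inv_nonneg.2 hr.le), inv_mul_cancel_left₀ hr.ne']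
  refine (hlip.hausdorffMeasure_image_le hd s).antisymm ?_
  calc ENNReal.ofReal r ^ d * μH[d] s
      ≤ ENNReal.ofReal r ^ d * (ENNReal.ofReal r⁻¹ ^ d * μH[d] (f '' s)) := by
        gcongr; exact hanti.le_hausdorffMeasure_image hd s
    _ = μH[d] (f '' s) := by
      rw [← mul_assoc, ← ENNReal.mul_rpow_of_nonneg _ _ hd, ← ENNReal.ofReal_mul hr.le,
        mul_inv_cancel₀ hr.ne', ENNReal.ofReal_one, ENNReal.one_rpow, one_mul]

lemma prefixList_length {α : Type} (ω : ℕ → α) (n : ℕ) : (prefixList ω n).length = n := by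
  simp [prefixList]

lemma prefixList_succ {α : Type} (ω : ℕ → α) (n : ℕ) :
    prefixList ω (n + 1) = prefixList ω n ++ [ω n] := by
  rw [prefixList, List.ofFn_succ']
  simp [prefixList]

namespace GIFS

variable {X : Type} [MetricSpace X] {N : ℕ} (G : GIFS X N) {E : Fin N → Set X}

section Paths

lemma isPathFrom_nil (i : Fin N) : G.IsPathFrom i [] :=
  ⟨List.isChain_nil, by simp⟩

variable {G} in
lemma isPathFrom_cons {i : Fin N} {e : G.Edge} {γ : List G.Edge} :
    G.IsPathFrom i (e :: γ) ↔ G.src e = i ∧ G.IsPathFrom (G.tgt e) γ := by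
  change List.IsChain _ (e :: γ) ∧ _ ↔ _ ∧ List.IsChain _ γ ∧ _
  cases γ <;> simp [List.isChain_cons_cons, eq_comm, and_comm]

lemma pathTgt_cons (i : Fin N) (e : G.Edge) (γ : List G.Edge) :
    G.pathTgt i (e :: γ) = G.pathTgt (G.tgt e) γ := by
  cases γ <;> simp [pathTgt, List.getLast?_eq_some_getLast]

lemma pathTgt_append_singleton (i : Fin N) (γ : List G.Edge) (e : G.Edge) :
    G.pathTgt i (γ ++ [e]) = G.tgt e := by
  simp [pathTgt]

lemma pathMap_append (γ η : List G.Edge) :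
    G.pathMap (γ ++ η) = G.pathMap γ ∘ G.pathMap η := by
  induction γ with
  | nil => rfl
  | cons e γ ih => simp only [pathMap, List.cons_append, List.foldr_cons] at ih ⊢; rw [ih]; rfl

lemma pathSet_nil (i : Fin N) : G.pathSet E i [] = E i := by
  simp [pathSet, pathMap, pathTgt]

lemma pathSet_cons (i : Fin N) (e : G.Edge) (γ : List G.Edge) :
    G.pathSet E i (e :: γ) = G.g e '' G.pathSet E (G.tgt e) γ := by
  rw [pathSet, pathSet, pathTgt_cons, ← image_comp]
  rfl

open Classical in
def pathsOfLength (i : Fin N) (n : ℕ) : Finset (List G.Edge) :=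
  (Finset.univ.image (List.ofFn (n := n))).filter (G.IsPathFrom i)

variable {i : Fin N}

lemma isPathFrom_append_singleton {γ : List G.Edge} {e : G.Edge} (hγ : G.IsPathFrom i γ)
    (he : G.src e = G.pathTgt i γ) : G.IsPathFrom i (γ ++ [e]) := by
  induction γ generalizing i with
  | nil => exact isPathFrom_cons.2 ⟨he, G.isPathFrom_nil _⟩
  | cons f γ ih =>
    rw [pathTgt_cons] at he
    rw [isPathFrom_cons] at hγ
    rw [List.cons_append, isPathFrom_cons]
    exact ⟨hγ.1, ih hγ.2 he⟩

lemma pathTgt_prefixList (ω : G.InfPath i) (n : ℕ) :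
    G.pathTgt i (prefixList ω.1 n) = G.src (ω.1 n) := by
  cases n with
  | zero => exact ω.2.1.symm
  | succ n => rw [prefixList_succ, pathTgt_append_singleton, ω.2.2 n]

lemma isPathFrom_prefixList (ω : G.InfPath i) (n : ℕ) : G.IsPathFrom i (prefixList ω.1 n) := by
  induction n with
  | zero => exact G.isPathFrom_nil i
  | succ n ih =>
    rw [prefixList_succ]
    exact G.isPathFrom_append_singleton ih (G.pathTgt_prefixList ω n).symm

variable {G} in
lemma mem_pathsOfLength {n : ℕ} {γ : List G.Edge} :
    γ ∈ G.pathsOfLength i n ↔ G.IsPathFrom i γ ∧ γ.length = n := by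
  simp only [pathsOfLength, Finset.mem_filter, Finset.mem_image, Finset.mem_univ, true_and]
  constructor
  · rintro ⟨⟨v, rfl⟩, hv⟩
    exact ⟨hv, List.length_ofFn⟩
  · rintro ⟨hγ, rfl⟩
    exact ⟨⟨fun k => γ[k], List.ofFn_getElem⟩, hγ⟩

lemma prefixList_mem_pathsOfLength (ω : G.InfPath i) (n : ℕ) :
    prefixList ω.1 n ∈ G.pathsOfLength i n :=
  mem_pathsOfLength.2 ⟨G.isPathFrom_prefixList ω n, prefixList_length _ _⟩

end Paths

section Invariant

variable {G} {i : Fin N} (hE : G.IsInvariant E)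
include hE

lemma IsInvariant.image_subset (e : G.Edge) : G.g e '' E (G.tgt e) ⊆ E (G.src e) := by
  rw [hE.2.2 (G.src e)]
  exact subset_biUnion_of_mem (u := fun e => G.g e '' E (G.tgt e)) rfl

lemma IsInvariant.pathSet_subset {γ : List G.Edge} (hγ : G.IsPathFrom i γ) :
    G.pathSet E i γ ⊆ E i := by
  induction γ generalizing i with
  | nil => rw [pathSet_nil]
  | cons e γ ih =>
    obtain ⟨rfl, hγ'⟩ := isPathFrom_cons.1 hγ
    rw [pathSet_cons]
    exact (image_mono (ih hγ')).trans (hE.image_subset e)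

lemma IsInvariant.pathSet_append_singleton_subset {γ : List G.Edge} {e : G.Edge}
    (he : G.src e = G.pathTgt i γ) : G.pathSet E i (γ ++ [e]) ⊆ G.pathSet E i γ := by
  rw [pathSet, pathSet, pathMap_append, pathTgt_append_singleton, image_comp, ← he]
  exact image_mono (hE.image_subset e)

lemma IsInvariant.antitone_pathSet_prefixList (ω : G.InfPath i) :
    Antitone fun n => G.pathSet E i (prefixList ω.1 n) := by
  refine antitone_nat_of_succ_le fun n => ?_
  rw [prefixList_succ]
  exact hE.pathSet_append_singleton_subset (G.pathTgt_prefixList ω n).symm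

lemma IsInvariant.iUnion_pathSet_pathsOfLength (n : ℕ) :
    ⋃ γ ∈ G.pathsOfLength i n, G.pathSet E i γ = E i := by
  refine (iUnion₂_subset fun γ hγ => hE.pathSet_subset (mem_pathsOfLength.1 hγ).1).antisymm ?_
  induction n generalizing i with
  | zero =>
    intro x hx
    exact mem_iUnion₂.2 ⟨[], mem_pathsOfLength.2 ⟨G.isPathFrom_nil i, rfl⟩, by rwa [pathSet_nil]⟩
  | succ n ih =>
    intro x hx
    rw [hE.2.2 i] at hx
    obtain ⟨e, rfl, y, hy, rfl⟩ : ∃ e, G.src e = i ∧ x ∈ G.g e '' E (G.tgt e) := by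
      simpa using hx
    obtain ⟨γ, hγn, hyγ⟩ := mem_iUnion₂.1 (ih hy)
    obtain ⟨hγ, rfl⟩ := mem_pathsOfLength.1 hγn
    refine mem_iUnion₂.2 ⟨e :: γ, mem_pathsOfLength.2 ⟨isPathFrom_cons.2 ⟨rfl, hγ⟩, rfl⟩, ?_⟩
    rw [pathSet_cons]
    exact mem_image_of_mem _ hyγ

end Invariant

section Cylinders

def cyl (i : Fin N) (γ : List G.Edge) : Set (G.InfPath i) :=
  {ω | prefixList ω.1 γ.length = γ}

variable {i : Fin N}

instance : DiscreteMeasurableSpace G.Edge := ⟨fun _ => MeasurableSpace.measurableSet_top⟩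

lemma measurableSet_cyl (γ : List G.Edge) : MeasurableSet (G.cyl i γ) := by
  have hprefix : Measurable fun ω : G.InfPath i => fun k : Fin γ.length => ω.1 k :=
    measurable_pi_lambda _ fun k => (measurable_pi_apply _).comp (comap_measurable _)
  exact hprefix (toFinite {v | List.ofFn v = γ}).measurableSet

lemma cyl_nil : G.cyl i [] = univ :=
  eq_univ_of_forall fun _ => rfl

lemma mem_cyl_prefixList (ω : G.InfPath i) (n : ℕ) : ω ∈ G.cyl i (prefixList ω.1 n) := by
  simp [cyl, prefixList_length]

lemma measure_univ_eq_sum_cyl (P : Measure (G.InfPath i)) (n : ℕ) :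
    P univ = ∑ γ ∈ G.pathsOfLength i n, P (G.cyl i γ) := by
  have hcover : ⋃ γ ∈ G.pathsOfLength i n, G.cyl i γ = univ :=
    eq_univ_of_forall fun ω => mem_iUnion₂.2
      ⟨_, G.prefixList_mem_pathsOfLength ω n, G.mem_cyl_prefixList ω n⟩
  have hdisj : (G.pathsOfLength i n : Set (List G.Edge)).PairwiseDisjoint (G.cyl i) := by
    intro γ hγ γ' hγ' hne
    refine disjoint_left.2 fun ω (hω : _ = γ) (hω' : _ = γ') => hne ?_
    rw [← hω, ← hω', (mem_pathsOfLength.1 hγ).2, (mem_pathsOfLength.1 hγ').2]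
  rw [← hcover, measure_biUnion_finset hdisj fun γ _ => G.measurableSet_cyl γ]

end Cylinders

section Contraction

variable {i : Fin N}

lemma exists_r_le_lt_one : ∃ ρ, 0 ≤ ρ ∧ ρ < 1 ∧ ∀ e, G.r e ≤ ρ := by
  cases isEmpty_or_nonempty G.Edge
  · exact ⟨0, le_rfl, zero_lt_one, isEmptyElim⟩
  · obtain ⟨e₀, he₀⟩ := Finite.exists_max G.r
    exact ⟨G.r e₀, (G.r_pos e₀).le, G.r_lt_one e₀, he₀⟩

lemma prod_r_pos (γ : List G.Edge) : 0 < (γ.map G.r).prod :=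
  List.prod_pos (by simpa using fun e _ => G.r_pos e)

lemma pathMap_dist (γ : List G.Edge) (x y : X) :
    dist (G.pathMap γ x) (G.pathMap γ y) = (γ.map G.r).prod * dist x y := by
  induction γ with
  | nil => simp [pathMap]
  | cons e γ ih =>
    simp only [pathMap, List.foldr_cons, Function.comp_apply] at ih ⊢
    rw [G.g_sim, ih, List.map_cons, List.prod_cons, mul_assoc]

variable {G} in
lemma IsInvariant.dist_le_of_mem_pathSet (hE : G.IsInvariant E) {γ : List G.Edge} {x y : X}
    (hx : x ∈ G.pathSet E i γ) (hy : y ∈ G.pathSet E i γ) :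
    dist x y ≤ (γ.map G.r).prod * Metric.diam (E (G.pathTgt i γ)) := by
  obtain ⟨a, ha, rfl⟩ := hx
  obtain ⟨b, hb, rfl⟩ := hy
  rw [pathMap_dist]
  exact mul_le_mul_of_nonneg_left (Metric.dist_le_diam_of_mem (hE.2.1 _).isBounded ha hb)
    (G.prod_r_pos γ).le

variable {G} in
lemma IsInvariant.exists_pathSet_prefixList_subset (hE : G.IsInvariant E)
    {π : G.InfPath i → X} (hπ : G.IsCoding E i π) (ω : G.InfPath i) {U : Set X}
    (hU : IsOpen U) (hωU : π ω ∈ U) : ∃ n, G.pathSet E i (prefixList ω.1 n) ⊆ U := by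
  obtain ⟨ε, hε, hball⟩ := Metric.isOpen_iff.1 hU _ hωU
  obtain ⟨ρ, hρ0, hρ1, hr⟩ := G.exists_r_le_lt_one
  set D := ∑ j, Metric.diam (E j)
  have hsmall : ∀ n, ∀ x ∈ G.pathSet E i (prefixList ω.1 n), dist x (π ω) ≤ ρ ^ n * D := by
    intro n x hx
    refine (hE.dist_le_of_mem_pathSet hx (hπ ω n)).trans (mul_le_mul ?_ ?_ ?_ ?_)
    · simpa [prefixList_length] using List.prod_map_le_prod_map₀ (s := prefixList ω.1 n) G.r
        (fun _ => ρ) (fun e _ => (G.r_pos e).le) (fun e _ => hr e)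
    · exact Finset.single_le_sum (fun j _ => Metric.diam_nonneg) (Finset.mem_univ _)
    · exact Metric.diam_nonneg
    · positivity
  have hlim : Tendsto (fun n => ρ ^ n * D) atTop (𝓝 0) := by
    simpa using (tendsto_pow_atTop_nhds_zero_of_lt_one hρ0 hρ1).mul_const D
  obtain ⟨n, hn⟩ := (hlim.eventually (gt_mem_nhds hε)).exists
  exact ⟨n, fun x hx => hball ((hsmall n x hx).trans_lt hn)⟩

end Contraction

section Coding

variable {G} {i : Fin N} [MeasurableSpace X] {μ : Measure X} {P : Measure (G.InfPath i)}
  {π : G.InfPath i → X} (hE : G.IsInvariant E) (hπ : G.IsCoding E i π)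
  (hcyl : ∀ γ, G.IsPathFrom i γ → P (G.cyl i γ) = μ (G.pathSet E i γ)) (hfin : μ (E i) ≠ ∞)
include hE hcyl hfin

lemma IsInvariant.measure_iUnion_pathSet_eq_sum {n : ℕ} {T : Finset (List G.Edge)}
    (hT : T ⊆ G.pathsOfLength i n) :
    μ (⋃ γ ∈ T, G.pathSet E i γ) = ∑ γ ∈ T, μ (G.pathSet E i γ) := by
  have hsum : ∑ γ ∈ G.pathsOfLength i n, μ (G.pathSet E i γ) = μ (E i) := by
    rw [← Finset.sum_congr rfl fun γ hγ => hcyl γ (mem_pathsOfLength.1 hγ).1,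
      ← G.measure_univ_eq_sum_cyl, ← G.cyl_nil, hcyl [] (G.isPathFrom_nil i), G.pathSet_nil]
  refine measure_biUnion_finset_eq_sum_of_subset hT ?_ (hsum ▸ hfin)
  rw [hE.iUnion_pathSet_pathsOfLength, hsum]

include hπ

lemma IsInvariant.measure_preimage_le_of_isOpen {U : Set X} (hU : IsOpen U) :
    P (π ⁻¹' U) ≤ μ (U ∩ E i) := by
  classical
  set V : ℕ → Set (G.InfPath i) := fun n => {ω | G.pathSet E i (prefixList ω.1 n) ⊆ U}
  have hV : Monotone V := fun m n hmn ω hω => (hE.antitone_pathSet_prefixList ω hmn).trans hω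
  have hπV : π ⁻¹' U ⊆ ⋃ n, V n := fun ω hω =>
    mem_iUnion.2 (hE.exists_pathSet_prefixList_subset hπ ω hU hω)
  refine (measure_mono hπV).trans ?_
  rw [hV.measure_iUnion]
  refine iSup_le fun n => ?_
  set T := (G.pathsOfLength i n).filter fun γ => G.pathSet E i γ ⊆ U
  have hT : ∀ γ ∈ T, G.IsPathFrom i γ ∧ G.pathSet E i γ ⊆ U := fun γ hγ =>
    ⟨(mem_pathsOfLength.1 (Finset.mem_filter.1 hγ).1).1, (Finset.mem_filter.1 hγ).2⟩
  calc P (V n) ≤ P (⋃ γ ∈ T, G.cyl i γ) := measure_mono fun ω hω => mem_iUnion₂.2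
        ⟨_, Finset.mem_filter.2 ⟨G.prefixList_mem_pathsOfLength ω n, hω⟩,
          G.mem_cyl_prefixList ω n⟩
    _ ≤ ∑ γ ∈ T, P (G.cyl i γ) := measure_biUnion_finset_le _ _
    _ = ∑ γ ∈ T, μ (G.pathSet E i γ) := Finset.sum_congr rfl fun γ hγ => hcyl γ (hT γ hγ).1
    _ = μ (⋃ γ ∈ T, G.pathSet E i γ) :=
      (hE.measure_iUnion_pathSet_eq_sum hcyl hfin (Finset.filter_subset _ _)).symm
    _ ≤ μ (U ∩ E i) := measure_mono <| iUnion₂_subset fun γ hγ =>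
      subset_inter (hT γ hγ).2 (hE.pathSet_subset (hT γ hγ).1)

theorem IsInvariant.measure_inter_eq_measure_preimage [BorelSpace X] {B : Set X}
    (hB : MeasurableSet B) : μ (B ∩ E i) = P (π ⁻¹' B) := by
  have : IsFiniteMeasure (μ.restrict (E i)) := isFiniteMeasure_restrict.2 hfin
  rw [← Measure.restrict_apply hB]
  refine (measure_preimage_eq_of_forall_le (measure_preimage_le_of_forall_isOpen fun U hU => ?_)
    ?_ hB).symm
  · rw [Measure.restrict_apply hU.measurableSet]
    exact hE.measure_preimage_le_of_isOpen hπ hcyl hfin hU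
  · rw [Measure.restrict_apply_univ, ← G.pathSet_nil (E := E), ← hcyl [] (G.isPathFrom_nil i),
      G.cyl_nil]

end Coding

section Hausdorff

variable {i : Fin N}

lemma hausdorffMeasure_pathSet [MeasurableSpace X] [BorelSpace X] {δ : ℝ} (hδ : 0 ≤ δ)
    (γ : List G.Edge) :
    μH[δ] (G.pathSet E i γ)
      = ENNReal.ofReal ((γ.map G.r).prod ^ δ) * μH[δ] (E (G.pathTgt i γ)) := by
  rw [pathSet, hausdorffMeasure_image_of_dist_eq (G.prod_r_pos γ) (G.pathMap_dist γ) hδ,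
    ENNReal.ofReal_rpow_of_pos (G.prod_r_pos γ)]

lemma mul_prod_markov {δ : ℝ} {h : Fin N → ℝ} (hh : ∀ j, h j ≠ 0) {γ : List G.Edge}
    (hγ : G.IsPathFrom i γ) :
    h i * (γ.map fun e => h (G.tgt e) * G.r e ^ δ / h (G.src e)).prod
      = (γ.map G.r).prod ^ δ * h (G.pathTgt i γ) := by
  induction γ generalizing i with
  | nil => simp [pathTgt]
  | cons e γ ih =>
    obtain ⟨rfl, hγ'⟩ := isPathFrom_cons.1 hγ
    rw [List.map_cons, List.prod_cons, List.map_cons, List.prod_cons, pathTgt_cons,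
      Real.mul_rpow (G.r_pos e).le (G.prod_r_pos γ).le, mul_assoc, ← ih hγ']
    field_simp [hh (G.src e)]

end Hausdorff

end GIFS

theorem hausdorff_eq_markov_pushforward_general {d N : ℕ} (G : GIFS (EuclideanSpace ℝ (Fin d)) N)
    (E : Fin N → Set (EuclideanSpace ℝ (Fin d))) (hE : G.IsInvariant E)
    (δ : ℝ) (hδ : G.IsSimDim δ)
    (hfin : ∀ j, 0 < μH[δ] (E j) ∧ μH[δ] (E j) < ⊤)
    (h : Fin N → ℝ) (hh : ∀ j, h j = (μH[δ] (E j)).toReal) (i : Fin N)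
    (P : Measure (G.InfPath i))
    (hP : ∀ γ : List G.Edge, G.IsPathFrom i γ →
        P {ω : G.InfPath i | prefixList ω.1 γ.length = γ}
          = ENNReal.ofReal (h i *
              (γ.map fun e => h (G.tgt e) * G.r e ^ δ / h (G.src e)).prod))
    (π : G.InfPath i → EuclideanSpace ℝ (Fin d)) (hπ : G.IsCoding E i π) :
    ∀ B : Set (EuclideanSpace ℝ (Fin d)), MeasurableSet B → μH[δ] (B ∩ E i) = P (π ⁻¹' B) := by
  have hμE : ∀ j, μH[δ] (E j) = ENNReal.ofReal (h j) := fun j => by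
    rw [hh, ENNReal.ofReal_toReal (hfin j).2.ne]
  have hh0 : ∀ j, h j ≠ 0 := fun j => by
    rw [hh]; exact (ENNReal.toReal_pos (hfin j).1.ne' (hfin j).2.ne).ne'
  have hcyl : ∀ γ, G.IsPathFrom i γ → P (G.cyl i γ) = μH[δ] (G.pathSet E i γ) := fun γ hγ => by
    rw [GIFS.cyl, hP γ hγ, G.mul_prod_markov hh0 hγ,
      ENNReal.ofReal_mul (Real.rpow_nonneg (G.prod_r_pos γ).le δ), ← hμE,
      G.hausdorffMeasure_pathSet hδ.1.le]
  exact fun B hB => hE.measure_inter_eq_measure_preimage hπ hcyl (hfin i).2.ne hB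

/-- **Theorem 8.2.** For a GIFS with the open set condition and
`0 < h_i = H^δ(E_i) < ∞`, the restricted Hausdorff measure `μ_i = H^δ|_{E_i}` is the
push-forward of the Markov measure `P_i` under the projection `π_i`. -/
theorem hausdorff_eq_markov_pushforward {d N : ℕ} (G : GIFS (EuclideanSpace ℝ (Fin d)) N)
    (E : Fin N → Set (EuclideanSpace ℝ (Fin d))) (hE : G.IsInvariant E)
    (hosc : G.OSC) (δ : ℝ) (hδ : G.IsSimDim δ)
    (hfin : ∀ j, 0 < μH[δ] (E j) ∧ μH[δ] (E j) < ⊤)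
    (h : Fin N → ℝ) (hh : ∀ j, h j = (μH[δ] (E j)).toReal) (i : Fin N)
    (P : Measure (G.InfPath i))
    (hP : ∀ γ : List G.Edge, G.IsPathFrom i γ →
        P {ω : G.InfPath i | prefixList ω.1 γ.length = γ}
          = ENNReal.ofReal (h i *
              (γ.map fun e => h (G.tgt e) * G.r e ^ δ / h (G.src e)).prod))
    (π : G.InfPath i → EuclideanSpace ℝ (Fin d)) (hπ : G.IsCoding E i π) :
    ∀ B : Set (EuclideanSpace ℝ (Fin d)), MeasurableSet B → μH[δ] (B ∩ E i) = P (π ⁻¹' B) :=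
  hausdorff_eq_markov_pushforward_general G E hE δ hδ hfin h hh i P hP π hπ
end
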